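/- Conditioned on the initial segment γ[0,j] of the loop erasure of the time-reversed walk, the remaining path γ[j,l] has the same distribution as the loop erasure of the time reversal of the natural random walk stopped on exiting D_j = D \ ∪_{i<j}[γ_i, γ_{i+1}], conditioned to exit at γ_j; moreover S[0,n_j] and S[n_j, τ_D] are conditionally independent, where n_j = min{n : S(n) = γ_j}. -/

import Mathlib

/-!
Let `u = S[0,n_j]` and `v = S[n_j,τ_D]`, so that the reversed walk is `v.reverse` followed by
`u.reverse` without its first vertex `c`. Loop erasure is a stack algorithm: after reading
`v.reverse` the stack is `loopErase v.reverse`, with `c` on top. If `u` avoids this stack, it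
stays untouched and `γ = loopErase v.reverse ++ (loopErase u.reverse).tail`; otherwise the first
vertex of `u` that hits it pops `c`, which never returns. Hence `γ[0,j] = η` exactly when
`loopErase v.reverse = η` and `u` is a walk in `D \ η` exiting at `c`; the event is a product of
an event on `u` and one on `v`, and the path weight is multiplicative over the split.
-/

open scoped ENNReal

variable {V : Type*}

/-- The weight of a path: the product of the transition probabilities along its steps. -/
noncomputable def pathWeight (p : V → V → ℝ≥0∞) : List V → ℝ≥0∞
  | [] => 1
  | [_] => 1
  | a :: b :: l => p a b * pathWeight p (b :: l)

/-- Chronological loop erasure of a finite path: loops are erased as they are created. -/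
def loopErase [DecidableEq V] : List V → List V :=
  go []
where
  go : List V → List V → List V
  | acc, [] => acc.reverse
  | acc, a :: l => if a ∈ acc then go (acc.drop (acc.idxOf a)) l else go (a :: acc) l

/-- `l` is a possible trajectory of the walk started at `x` and stopped on exiting `D`:
it starts at `x`, all its entries except the last lie in `D`, and the last one is
outside `D`. -/
def IsStoppedPath (D : Set V) (x : V) (l : List V) : Prop :=
  l.head? = some x ∧ (∀ v ∈ l.dropLast, v ∈ D) ∧ ∃ y, l.getLast? = some y ∧ y ∉ D

/-- `p` is a (sub)stochastic transition kernel. -/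
def IsStochastic (p : V → V → ℝ≥0∞) : Prop := ∀ u, ∑' v, p u v = 1

/-- Irreducibility of the walk with kernel `p`. -/
def IsIrreducibleKernel (p : V → V → ℝ≥0∞) : Prop :=
  ∀ u v : V, ∃ l : List V, l.head? = some u ∧ l.getLast? = some v ∧ 0 < pathWeight p l

/-- The event that the stopped walk decomposes as `S[0,n_j] = u` and `S[n_j,τ_D] = v`,
where `n_j` is the first hitting time of `c = γ_j`, together with the event that the
loop erasure `γ` of the time reversal of the walk has initial segment `η = γ[0,j]`. -/
def SplitAt [DecidableEq V] (D : Set V) (v0 c : V) (η : List V) (j : ℕ)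
    (u v : List V) : Prop :=
  u.head? = some v0 ∧ u.getLast? = some c ∧ c ∉ u.dropLast ∧ v.head? = some c ∧
    IsStoppedPath D v0 (u ++ v.tail) ∧ (loopErase (u ++ v.tail).reverse).take (j + 1) = η

theorem List.Nodup.eq_of_isPrefix_of_getLast?_eq {α : Type*} {l l₁ l₂ : List α} {a : α}
    (hl : l.Nodup) (h₁ : l₁ <+: l) (h₂ : l₂ <+: l)
    (ha₁ : l₁.getLast? = some a) (ha₂ : l₂.getLast? = some a) : l₁ = l₂ := by
  wlog hlen : l₁.length ≤ l₂.length generalizing l₁ l₂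
  · exact (this h₂ h₁ ha₂ ha₁ (by omega)).symm
  obtain ⟨r, rfl⟩ := List.prefix_of_prefix_length_le h₁ h₂ hlen
  rcases List.eq_nil_or_concat r with rfl | ⟨r, b, rfl⟩
  · simp
  · obtain rfl : b = a := by simpa using ha₂
    have hnd := h₂.sublist.nodup hl
    simp only [List.concat_eq_append, List.nodup_append] at hnd
    exact absurd rfl (hnd.2.2 b (List.mem_of_getLast? ha₁) b (by simp))

theorem List.exists_append_cons_of_mem {α : Type*} {a : α} {l : List α} (h : a ∈ l) :
    ∃ s t, a ∉ s ∧ l = s ++ a :: t := by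
  induction l with
  | nil => simp at h
  | cons b l ih =>
    by_cases hb : b = a
    · exact ⟨[], l, by simp, by simp [hb]⟩
    · obtain ⟨s, t, hs, rfl⟩ := ih ((List.mem_cons.mp h).resolve_left (Ne.symm hb))
      exact ⟨b :: s, t, by simp [hs, Ne.symm hb], rfl⟩

theorem List.append_cons_inj_of_notMem_left {α : Type*} {s₁ s₂ t₁ t₂ : List α} {a : α}
    (h₁ : a ∉ s₁) (h₂ : a ∉ s₂) (h : s₁ ++ a :: t₁ = s₂ ++ a :: t₂) :
    s₁ = s₂ ∧ t₁ = t₂ := by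
  rw [List.append_eq_append_iff] at h
  rcases h with ⟨r, rfl, hr⟩ | ⟨r, rfl, hr⟩ <;> cases r <;> simp_all

section LoopErase
variable [DecidableEq V]

def loopEraseStep (s : List V) (a : V) : List V :=
  if a ∈ s then s.drop (s.idxOf a) else a :: s

theorem loopErase_go_eq (s l : List V) :
    loopErase.go s l = (l.foldl loopEraseStep s).reverse := by
  induction l generalizing s with
  | nil => rfl
  | cons a l ih => simp only [loopErase.go, List.foldl_cons, loopEraseStep]; split_ifs <;> apply ih

theorem loopErase_eq_foldl (l : List V) : loopErase l = (l.foldl loopEraseStep []).reverse :=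
  loopErase_go_eq [] l

theorem head?_loopEraseStep (s : List V) (a : V) : (loopEraseStep s a).head? = some a := by
  unfold loopEraseStep
  split_ifs with h
  · rw [List.head?_drop, List.getElem?_idxOf h]
  · rfl

theorem mem_of_mem_loopEraseStep {s : List V} {a x : V} (h : x ∈ loopEraseStep s a) :
    x ∈ s ∨ x = a := by
  unfold loopEraseStep at h
  split_ifs at h
  · exact Or.inl (List.mem_of_mem_drop h)
  · exact (List.mem_cons.mp h).symm

theorem nodup_loopEraseStep {s : List V} (hs : s.Nodup) (a : V) : (loopEraseStep s a).Nodup := by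
  unfold loopEraseStep
  split_ifs with h
  · exact (List.drop_sublist _ _).nodup hs
  · exact List.nodup_cons.mpr ⟨h, hs⟩

theorem loopEraseStep_append_of_notMem {a : V} {B : List V} (h : a ∉ B) (s : List V) :
    loopEraseStep (s ++ B) a = loopEraseStep s a ++ B := by
  unfold loopEraseStep
  by_cases has : a ∈ s
  · rw [if_pos (List.mem_append_left B has), if_pos has, List.idxOf_append_of_mem has,
      List.drop_append_of_le_length (List.idxOf_lt_length_iff.mpr has).le]
  · rw [if_neg (by simp [has, h]), if_neg has, List.cons_append]

theorem loopEraseStep_append_of_mem_right {a : V} {s B : List V} (hs : a ∉ s) (hB : a ∈ B) :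
    loopEraseStep (s ++ B) a = loopEraseStep B a := by
  unfold loopEraseStep
  rw [if_pos (List.mem_append_right s hB), if_pos hB, List.idxOf_append_of_notMem hs,
    List.drop_length_add_append]

theorem mem_of_mem_foldl_loopEraseStep {s l : List V} {x : V}
    (h : x ∈ l.foldl loopEraseStep s) : x ∈ s ∨ x ∈ l := by
  induction l generalizing s with
  | nil => exact Or.inl h
  | cons a l ih =>
    rcases ih h with h | h
    · rcases mem_of_mem_loopEraseStep h with h | rfl
      · exact Or.inl h
      · exact Or.inr List.mem_cons_self
    · exact Or.inr (List.mem_cons_of_mem a h)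

theorem nodup_foldl_loopEraseStep {s : List V} (hs : s.Nodup) (l : List V) :
    (l.foldl loopEraseStep s).Nodup := by
  induction l generalizing s with
  | nil => exact hs
  | cons a l ih => exact ih (nodup_loopEraseStep hs a)

theorem foldl_loopEraseStep_append_of_disjoint {l B : List V} (h : ∀ x ∈ l, x ∉ B)
    (s : List V) : l.foldl loopEraseStep (s ++ B) = l.foldl loopEraseStep s ++ B := by
  induction l generalizing s with
  | nil => rfl
  | cons a l ih =>
    rw [List.foldl_cons, List.foldl_cons, loopEraseStep_append_of_notMem (h a List.mem_cons_self),
      ih fun x hx => h x (List.mem_cons_of_mem a hx)]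

/-- Once a vertex of `B` below `c` on the stack is revisited, `c` is popped, and it is never
pushed again since `c ∉ l`. -/
theorem notMem_foldl_loopEraseStep {c : V} {l B : List V} (hc : c ∉ l) (hB : ∃ x ∈ l, x ∈ B)
    (g : List V) (hnd : (g ++ c :: B).Nodup) : c ∉ l.foldl loopEraseStep (g ++ c :: B) := by
  induction l generalizing g with
  | nil => simp at hB
  | cons a l ih =>
    have hca : c ≠ a := fun h => hc (h ▸ List.mem_cons_self)
    have hcl : c ∉ l := fun h => hc (List.mem_cons_of_mem a h)
    rw [List.foldl_cons]
    by_cases haB : a ∈ B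
    · have hag : a ∉ g ++ [c] := fun h =>
        (List.nodup_append.mp (by simpa using hnd)).2.2 a h a haB rfl
      have hcB : c ∉ B := (List.nodup_cons.mp (List.nodup_append.mp hnd).2.1).1
      rw [show g ++ c :: B = (g ++ [c]) ++ B by simp, loopEraseStep_append_of_mem_right hag haB]
      intro h
      rcases mem_of_mem_foldl_loopEraseStep h with h | h
      · rcases mem_of_mem_loopEraseStep h with h | h
        · exact hcB h
        · exact hca h
      · exact hcl h
    · have haB' : a ∉ c :: B := by simp [haB, Ne.symm hca]
      obtain ⟨x, hx, hxB⟩ := hB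
      have hxl : x ∈ l := (List.mem_cons.mp hx).resolve_left (by rintro rfl; exact haB hxB)
      rw [loopEraseStep_append_of_notMem haB']
      refine ih hcl ⟨x, hxl, hxB⟩ _ ?_
      rw [← loopEraseStep_append_of_notMem haB']
      exact nodup_loopEraseStep hnd a

theorem nodup_loopErase (l : List V) : (loopErase l).Nodup := by
  rw [loopErase_eq_foldl, List.nodup_reverse]
  exact nodup_foldl_loopEraseStep List.nodup_nil l

theorem mem_of_mem_loopErase {l : List V} {x : V} (h : x ∈ loopErase l) : x ∈ l := by
  rw [loopErase_eq_foldl, List.mem_reverse] at h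
  simpa using mem_of_mem_foldl_loopEraseStep h

theorem foldl_loopEraseStep_concat (l : List V) (a : V) :
    ∃ B, (l ++ [a]).foldl loopEraseStep [] = a :: B := by
  rw [List.foldl_concat]
  exact List.head?_eq_some_iff.mp (head?_loopEraseStep _ a)

theorem getLast?_loopErase_concat (l : List V) (a : V) :
    (loopErase (l ++ [a])).getLast? = some a := by
  obtain ⟨B, hB⟩ := foldl_loopEraseStep_concat l a
  rw [loopErase_eq_foldl, hB]
  simp

theorem loopErase_append_of_disjoint {a b : List V} (h : ∀ x ∈ b, x ∉ loopErase a) :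
    loopErase (a ++ b) = loopErase a ++ loopErase b := by
  have h' : ∀ x ∈ b, x ∉ a.foldl loopEraseStep [] := by
    simpa [loopErase_eq_foldl] using h
  rw [loopErase_eq_foldl, List.foldl_append, ← List.nil_append (a.foldl _ _),
    foldl_loopEraseStep_append_of_disjoint h', List.reverse_append, loopErase_eq_foldl,
    loopErase_eq_foldl]

theorem notMem_loopErase_append {a b : List V} {c : V} (ha : a.getLast? = some c) (hc : c ∉ b)
    (hb : ∃ x ∈ b, x ∈ loopErase a) : c ∉ loopErase (a ++ b) := by
  obtain ⟨a, rfl⟩ := List.getLast?_eq_some_iff.mp ha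
  obtain ⟨B, hB⟩ := foldl_loopEraseStep_concat a c
  obtain ⟨x, hxb, hxa⟩ := hb
  have hxB : x ∈ B := by
    rw [loopErase_eq_foldl, hB, List.mem_reverse] at hxa
    exact (List.mem_cons.mp hxa).resolve_left (by rintro rfl; exact hc hxb)
  have hnd : ([] ++ c :: B).Nodup := hB ▸ nodup_foldl_loopEraseStep List.nodup_nil _
  rw [loopErase_eq_foldl, List.foldl_append, hB, List.mem_reverse]
  exact notMem_foldl_loopEraseStep hc ⟨x, hxb, hxB⟩ [] hnd

end LoopErase

section StoppedPaths
variable {D : Set V} {c : V}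

theorem isStoppedPath_append_cons {x : V} {d t : List V} :
    IsStoppedPath D x (d ++ c :: t) ↔
      (d ++ [c]).head? = some x ∧ (∀ y ∈ d, y ∈ D) ∧ IsStoppedPath D c (c :: t) := by
  simp [IsStoppedPath, List.dropLast_append_of_ne_nil, List.head?_append, or_imp, forall_and,
    and_assoc]

theorem isStoppedPath_concat {x : V} {d : List V} :
    IsStoppedPath D x (d ++ [c]) ↔
      (d ++ [c]).head? = some x ∧ (∀ y ∈ d, y ∈ D) ∧ c ∉ D := by
  simp [IsStoppedPath]

end StoppedPaths

section Paths
variable [DecidableEq V] {D : Set V} {v0 c : V} {η : List V}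

theorem loopErase_reverse_concat {d : List V} (hc : c ∉ d) :
    loopErase (d ++ [c]).reverse = c :: loopErase d.reverse := by
  have hsingleton : loopErase [c] = [c] := rfl
  rw [List.reverse_concat', ← List.singleton_append, loopErase_append_of_disjoint, hsingleton,
    List.singleton_append]
  rw [hsingleton]
  exact fun x hx hxc => hc (List.mem_singleton.mp hxc ▸ List.mem_reverse.mp hx)

theorem loopErase_reverse_append_cons {d t : List V}
    (hd : ∀ x ∈ d, x ∉ loopErase (c :: t).reverse) :
    loopErase (d ++ c :: t).reverse = loopErase (c :: t).reverse ++ loopErase d.reverse := by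
  rw [show (d ++ c :: t).reverse = (c :: t).reverse ++ d.reverse by simp,
    loopErase_append_of_disjoint (by simpa using hd)]

theorem isPrefix_loopErase_reverse_iff {d t : List V} (hc : c ∉ d) (hη : η.getLast? = some c) :
    η <+: loopErase (d ++ c :: t).reverse ↔
      loopErase (c :: t).reverse = η ∧ ∀ x ∈ d, x ∉ η := by
  by_cases hdisj : ∀ x ∈ d, x ∉ loopErase (c :: t).reverse
  · have hE : (loopErase (c :: t).reverse).getLast? = some c := by
      simpa using getLast?_loopErase_concat t.reverse c
    have hnd := nodup_loopErase (d ++ c :: t).reverse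
    rw [loopErase_reverse_append_cons hdisj] at hnd ⊢
    refine ⟨fun hpre => ?_, fun ⟨hE, _⟩ => hE ▸ List.prefix_append _ _⟩
    obtain rfl := hnd.eq_of_isPrefix_of_getLast?_eq hpre (List.prefix_append _ _) hη hE
    exact ⟨rfl, hdisj⟩
  · have hcL : c ∉ loopErase (d ++ c :: t).reverse := by
      rw [show (d ++ c :: t).reverse = (c :: t).reverse ++ d.reverse by simp]
      push Not at hdisj
      exact notMem_loopErase_append (by simp) (by simpa using hc) (by simpa using hdisj)
    refine ⟨fun hpre => absurd (hpre.subset (List.mem_of_getLast? hη)) hcL, ?_⟩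
    rintro ⟨rfl, h⟩
    exact absurd h hdisj

theorem splitAt_iff {j : ℕ} (hη : η.length = j + 1) (hc : η.getLast? = some c) (u v : List V) :
    SplitAt D v0 c η j u v ↔
      (IsStoppedPath (D \ {x | x ∈ η}) v0 u ∧ u.getLast? = some c) ∧
        (IsStoppedPath D c v ∧ loopErase v.reverse = η) := by
  have hcη : c ∈ η := List.mem_of_getLast? hc
  have htake {l : List V} : l.take (j + 1) = η ↔ η <+: l := by
    rw [List.prefix_iff_eq_take, hη, eq_comm]
  have hsplit {d t : List V} : d ++ [c] ++ (c :: t).tail = d ++ c :: t := by simp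
  constructor
  · rintro ⟨-, hu, hcu, hv, hstop, hpre⟩
    obtain ⟨d, rfl⟩ := List.getLast?_eq_some_iff.mp hu
    obtain ⟨t, rfl⟩ := List.head?_eq_some_iff.mp hv
    rw [List.dropLast_concat] at hcu
    rw [hsplit, isStoppedPath_append_cons] at hstop
    rw [hsplit, htake, isPrefix_loopErase_reverse_iff hcu hc] at hpre
    refine ⟨⟨isStoppedPath_concat.mpr ⟨hstop.1, fun y hy => ⟨hstop.2.1 y hy, hpre.2 y hy⟩,
      fun h => h.2 hcη⟩, hu⟩, hstop.2.2, hpre.1⟩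
  · rintro ⟨⟨hu, hu'⟩, hv, hLE⟩
    obtain ⟨d, rfl⟩ := List.getLast?_eq_some_iff.mp hu'
    obtain ⟨t, rfl⟩ := List.head?_eq_some_iff.mp hv.1
    obtain ⟨hu0, hd, -⟩ := isStoppedPath_concat.mp hu
    have hcd : c ∉ d := fun h => (hd c h).2 hcη
    refine ⟨hu0, hu', by simpa using hcd, rfl, ?_, ?_⟩
    · rw [hsplit, isStoppedPath_append_cons]
      exact ⟨hu0, fun y hy => (hd y hy).1, hv⟩
    · rw [hsplit, htake, isPrefix_loopErase_reverse_iff hcd hc]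
      exact ⟨hLE, fun y hy => (hd y hy).2⟩

theorem isStoppedPath_and_take_loopErase_iff {j : ℕ} (hη : η.length = j + 1)
    (hc : η.getLast? = some c) {l : List V} :
    (IsStoppedPath D v0 l ∧ (loopErase l.reverse).take (j + 1) = η) ↔
      ∃ u v, ((IsStoppedPath (D \ {x | x ∈ η}) v0 u ∧ u.getLast? = some c) ∧
        (IsStoppedPath D c v ∧ loopErase v.reverse = η)) ∧ u ++ v.tail = l := by
  simp_rw [← splitAt_iff hη hc]
  constructor
  · rintro ⟨hstop, htake⟩
    have hcl : c ∈ l := List.mem_reverse.mp <| mem_of_mem_loopErase <|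
      List.take_subset _ _ (htake ▸ List.mem_of_getLast? hc)
    obtain ⟨d, t, hcd, rfl⟩ := List.exists_append_cons_of_mem hcl
    have hsplit : d ++ [c] ++ (c :: t).tail = d ++ c :: t := by simp
    refine ⟨d ++ [c], c :: t, ⟨?_, by simp, by simpa using hcd, rfl, by rwa [hsplit],
      by rwa [hsplit]⟩, hsplit⟩
    simpa [List.head?_append] using hstop.1
  · rintro ⟨u, v, ⟨-, -, -, -, hstop, htake⟩, rfl⟩
    exact ⟨hstop, htake⟩

theorem isStoppedPath_and_loopErase_eq_iff {j : ℕ} (hη : η.length = j + 1)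
    (hc : η.getLast? = some c) {ζ : List V} (hζ : ζ.head? = some c) {l : List V} :
    (IsStoppedPath D v0 l ∧ loopErase l.reverse = η ++ ζ.tail) ↔
      ∃ u v, ((IsStoppedPath (D \ {x | x ∈ η}) v0 u ∧ u.getLast? = some c ∧
        loopErase u.reverse = ζ) ∧ (IsStoppedPath D c v ∧ loopErase v.reverse = η)) ∧
          u ++ v.tail = l := by
  have hcη : c ∈ η := List.mem_of_getLast? hc
  have hcd {d : List V} (hd : ∀ x ∈ d, x ∈ D \ {x | x ∈ η}) : c ∉ d :=
    fun h => (hd c h).2 hcη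
  have hLE {d t : List V} (hd : ∀ x ∈ d, x ∈ D \ {x | x ∈ η})
      (hLEv : loopErase (c :: t).reverse = η) :
      loopErase (d ++ [c] ++ (c :: t).tail).reverse = η ++ loopErase d.reverse := by
    rw [show d ++ [c] ++ (c :: t).tail = d ++ c :: t by simp,
      loopErase_reverse_append_cons (hLEv ▸ fun x hx => (hd x hx).2), hLEv]
  constructor
  · rintro ⟨hstop, hLEl⟩
    have htake : (loopErase l.reverse).take (j + 1) = η := by rw [hLEl, ← hη, List.take_left]
    obtain ⟨u, v, ⟨⟨hu, hu'⟩, hv, hLEv⟩, rfl⟩ :=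
      (isStoppedPath_and_take_loopErase_iff hη hc).mp ⟨hstop, htake⟩
    obtain ⟨d, rfl⟩ := List.getLast?_eq_some_iff.mp hu'
    obtain ⟨t, rfl⟩ := List.head?_eq_some_iff.mp hv.1
    obtain ⟨-, hd, -⟩ := isStoppedPath_concat.mp hu
    rw [hLE hd hLEv] at hLEl
    refine ⟨d ++ [c], c :: t, ⟨⟨hu, hu', ?_⟩, hv, hLEv⟩, rfl⟩
    rw [loopErase_reverse_concat (hcd hd), List.append_cancel_left hLEl, List.cons_head?_tail hζ]
  · rintro ⟨u, v, ⟨⟨hu, hu', hLEu⟩, hv⟩, rfl⟩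
    refine ⟨((isStoppedPath_and_take_loopErase_iff hη hc).mpr
      ⟨u, v, ⟨⟨hu, hu'⟩, hv⟩, rfl⟩).1, ?_⟩
    obtain ⟨d, rfl⟩ := List.getLast?_eq_some_iff.mp hu'
    obtain ⟨t, rfl⟩ := List.head?_eq_some_iff.mp hv.1.1
    obtain ⟨-, hd, -⟩ := isStoppedPath_concat.mp hu
    rw [hLE hd hv.2, ← hLEu, loopErase_reverse_concat (hcd hd), List.tail_cons]
end Paths

section Weights
variable (p : V → V → ℝ≥0∞)

theorem pathWeight_append_cons (d : List V) (c : V) (t : List V) :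
    pathWeight p (d ++ c :: t) = pathWeight p (d ++ [c]) * pathWeight p (c :: t) := by
  induction d with
  | nil => simp [pathWeight]
  | cons a d ih =>
    cases d with
    | nil => simp [pathWeight]
    | cons b d =>
      simp only [List.cons_append, pathWeight] at ih ⊢
      rw [ih, mul_assoc]

variable {c : V}

theorem pathWeight_append_tail {u v : List V} (hu : u.getLast? = some c) (hv : v.head? = some c) :
    pathWeight p (u ++ v.tail) = pathWeight p u * pathWeight p v := by
  obtain ⟨d, rfl⟩ := List.getLast?_eq_some_iff.mp hu
  obtain ⟨t, rfl⟩ := List.head?_eq_some_iff.mp hv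
  simpa using pathWeight_append_cons p d c t

theorem tsum_pathWeight_append_tail_left {B : List V → Prop}
    (hB : ∀ v, B v → v.head? = some c) {u : List V} (hu : u.getLast? = some c) :
    ∑' v : {v // B v}, pathWeight p (u ++ v.1.tail) =
      pathWeight p u * ∑' v : {v // B v}, pathWeight p v := by
  rw [← ENNReal.tsum_mul_left]
  exact tsum_congr fun v => pathWeight_append_tail p hu (hB v v.2)

theorem tsum_pathWeight_append_tail_right {A : List V → Prop}
    (hA : ∀ u, A u → u.getLast? = some c) {v : List V} (hv : v.head? = some c) :
    ∑' u : {u // A u}, pathWeight p (u.1 ++ v.tail) =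
      (∑' u : {u // A u}, pathWeight p u) * pathWeight p v := by
  rw [← ENNReal.tsum_mul_right]
  exact tsum_congr fun u => pathWeight_append_tail p (hA u u.2) hv

theorem tsum_pathWeight_append_tail {A B : List V → Prop}
    (hA : ∀ u, A u → u.getLast? = some c) (hB : ∀ v, B v → v.head? = some c) :
    ∑' w : {w : List V × List V // A w.1 ∧ B w.2}, pathWeight p (w.1.1 ++ w.1.2.tail) =
      (∑' u : {u // A u}, pathWeight p u) * ∑' v : {v // B v}, pathWeight p v := by
  calc _ = ∑' w : {u // A u} × {v // B v}, pathWeight p w.1 * pathWeight p w.2 := by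
        rw [← Equiv.subtypeProdEquivProd.tsum_eq]
        exact tsum_congr fun w => pathWeight_append_tail p (hA _ w.2.1) (hB _ w.2.2)
    _ = _ := by simp only [ENNReal.tsum_prod', ENNReal.tsum_mul_left, ENNReal.tsum_mul_right]

theorem eq_of_append_tail_eq {u u' v v' : List V} (hu : u.getLast? = some c)
    (hcu : c ∉ u.dropLast) (hu' : u'.getLast? = some c) (hcu' : c ∉ u'.dropLast)
    (hv : v.head? = some c) (hv' : v'.head? = some c) (h : u ++ v.tail = u' ++ v'.tail) :
    u = u' ∧ v = v' := by
  obtain ⟨d, rfl⟩ := List.getLast?_eq_some_iff.mp hu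
  obtain ⟨d', rfl⟩ := List.getLast?_eq_some_iff.mp hu'
  obtain ⟨t, rfl⟩ := List.head?_eq_some_iff.mp hv
  obtain ⟨t', rfl⟩ := List.head?_eq_some_iff.mp hv'
  simp only [List.dropLast_concat] at hcu hcu'
  simp only [List.tail_cons, List.append_assoc, List.singleton_append] at h
  obtain ⟨rfl, rfl⟩ := List.append_cons_inj_of_notMem_left hcu hcu' h
  exact ⟨rfl, rfl⟩

theorem tsum_pathWeight_of_unique_split {A B L : List V → Prop}
    (hA : ∀ u, A u → u.getLast? = some c ∧ c ∉ u.dropLast)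
    (hB : ∀ v, B v → v.head? = some c)
    (hL : ∀ l, L l ↔ ∃ u v, (A u ∧ B v) ∧ u ++ v.tail = l) :
    ∑' l : {l // L l}, pathWeight p l =
      (∑' u : {u // A u}, pathWeight p u) * ∑' v : {v // B v}, pathWeight p v := by
  let f : {w : List V × List V // A w.1 ∧ B w.2} → {l // L l} :=
    fun w => ⟨w.1.1 ++ w.1.2.tail, (hL _).mpr ⟨_, _, w.2, rfl⟩⟩
  have hf : Function.Bijective f := by
    refine ⟨fun ⟨(u, v), hu, hv⟩ ⟨(u', v'), hu', hv'⟩ h => ?_, fun l => ?_⟩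
    · obtain ⟨rfl, rfl⟩ := eq_of_append_tail_eq (hA u hu).1 (hA u hu).2 (hA u' hu').1
        (hA u' hu').2 (hB v hv) (hB v' hv') (congrArg Subtype.val h)
      rfl
    · obtain ⟨u, v, huv, hl⟩ := (hL l).mp l.2
      exact ⟨⟨(u, v), huv⟩, Subtype.ext hl⟩
  rw [← (Equiv.ofBijective f hf).tsum_eq]
  exact tsum_pathWeight_append_tail p (fun u hu => (hA u hu).1) hB

end Weights

/-- Assertion (1) is the conditional independence of `S[0,n_j]` and `S[n_j,τ_D]` given
`γ[0,j] = η`, assertion (2) the law of `γ[j,l]`; both are identities between unnormalized laws,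
with the conditioning probabilities multiplied out. -/
theorem lerw_domain_markov_general [DecidableEq V]
    (p : V → V → ℝ≥0∞)
    (D : Set V) (v0 : V)
    (j : ℕ) (η : List V) (hη : η.length = j + 1) (c : V) (hc : η.getLast? = some c)
    (ζ : List V) (hζ : ζ.head? = some c) :
    (∀ u₀ v₀ : List V, SplitAt D v0 c η j u₀ v₀ →
      pathWeight p (u₀ ++ v₀.tail) *
          (∑' w : {w : List V × List V // SplitAt D v0 c η j w.1 w.2},
            pathWeight p ((w : List V × List V).1 ++ (w : List V × List V).2.tail))
        = (∑' v : {v : List V // SplitAt D v0 c η j u₀ v},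
              pathWeight p (u₀ ++ (v : List V).tail)) *
          (∑' u : {u : List V // SplitAt D v0 c η j u v₀},
              pathWeight p ((u : List V) ++ v₀.tail))) ∧
    (∑' l : {l : List V // IsStoppedPath D v0 l ∧ loopErase l.reverse = η ++ ζ.tail},
          pathWeight p (l : List V)) *
        (∑' m : {m : List V // IsStoppedPath (D \ {x | x ∈ η}) v0 m ∧
            m.getLast? = some c}, pathWeight p (m : List V))
      = (∑' l : {l : List V // IsStoppedPath D v0 l ∧
            (loopErase l.reverse).take (j + 1) = η}, pathWeight p (l : List V)) *
        (∑' m : {m : List V // IsStoppedPath (D \ {x | x ∈ η}) v0 m ∧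
            m.getLast? = some c ∧ loopErase m.reverse = ζ}, pathWeight p (m : List V)) := by
  have hcη : c ∈ η := List.mem_of_getLast? hc
  have hA : ∀ u, IsStoppedPath (D \ {x | x ∈ η}) v0 u ∧ u.getLast? = some c →
      u.getLast? = some c ∧ c ∉ u.dropLast :=
    fun u hu => ⟨hu.2, fun h => (hu.1.2.1 c h).2 hcη⟩
  have hB : ∀ v, IsStoppedPath D c v ∧ loopErase v.reverse = η → v.head? = some c :=
    fun v hv => hv.1.1
  have hsplit := splitAt_iff (D := D) (v0 := v0) hη hc
  refine ⟨fun u₀ v₀ h₀ => ?_, ?_⟩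
  · rw [hsplit] at h₀
    have hpairs : (fun w : List V × List V => SplitAt D v0 c η j w.1 w.2) = _ :=
      funext fun w => propext (hsplit w.1 w.2)
    have hfirst : SplitAt D v0 c η j u₀ = _ :=
      funext fun v => propext ((hsplit u₀ v).trans (and_iff_right h₀.1))
    have hsecond : (fun u => SplitAt D v0 c η j u v₀) = _ :=
      funext fun u => propext ((hsplit u v₀).trans (and_iff_left h₀.2))
    rw [hpairs, hfirst, hsecond, tsum_pathWeight_append_tail p (fun u hu => (hA u hu).1) hB,
      tsum_pathWeight_append_tail_left p hB h₀.1.2,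
      tsum_pathWeight_append_tail_right p (fun u hu => (hA u hu).1) (hB v₀ h₀.2),
      pathWeight_append_tail p h₀.1.2 (hB v₀ h₀.2)]
    ring
  · rw [tsum_pathWeight_of_unique_split p (fun u hu => hA u ⟨hu.1, hu.2.1⟩) hB
        (fun l => isStoppedPath_and_loopErase_eq_iff hη hc hζ),
      tsum_pathWeight_of_unique_split p hA hB
        (fun l => isStoppedPath_and_take_loopErase_iff hη hc)]
    ring

/-- the domain Markov property of LERW. Conditioned on `γ[0,j] = η`
(with `γ_j = c`): (1) the walk segments `S[0,n_j]` and `S[n_j,τ_D]` are conditionally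
independent, and (2) `γ[j,l]` is distributed as the loop erasure of the time reversal
of the walk stopped on exiting `D_j = D \ η`, conditioned to exit at `c`.  Both are
stated as product identities of unnormalized laws (i.e. with the conditioning
probabilities multiplied out). -/
theorem lerw_domain_markov [DecidableEq V] [Countable V]
    (p : V → V → ℝ≥0∞) (hstoch : IsStochastic p)
    (D : Set V) (hD : D.Finite) (v0 : V) (hv0 : v0 ∈ D)
    (j : ℕ) (η : List V) (hη : η.length = j + 1) (c : V) (hc : η.getLast? = some c)
    (ζ : List V) (hζ : ζ.head? = some c) :
    (∀ u₀ v₀ : List V, SplitAt D v0 c η j u₀ v₀ →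
      pathWeight p (u₀ ++ v₀.tail) *
          (∑' w : {w : List V × List V // SplitAt D v0 c η j w.1 w.2},
            pathWeight p ((w : List V × List V).1 ++ (w : List V × List V).2.tail))
        = (∑' v : {v : List V // SplitAt D v0 c η j u₀ v},
              pathWeight p (u₀ ++ (v : List V).tail)) *
          (∑' u : {u : List V // SplitAt D v0 c η j u v₀},
              pathWeight p ((u : List V) ++ v₀.tail))) ∧
    (∑' l : {l : List V // IsStoppedPath D v0 l ∧ loopErase l.reverse = η ++ ζ.tail},
          pathWeight p (l : List V)) *
        (∑' m : {m : List V // IsStoppedPath (D \ {x | x ∈ η}) v0 m ∧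
            m.getLast? = some c}, pathWeight p (m : List V))
      = (∑' l : {l : List V // IsStoppedPath D v0 l ∧
            (loopErase l.reverse).take (j + 1) = η}, pathWeight p (l : List V)) *
        (∑' m : {m : List V // IsStoppedPath (D \ {x | x ∈ η}) v0 m ∧
            m.getLast? = some c ∧ loopErase m.reverse = ζ}, pathWeight p (m : List V)) :=
  lerw_domain_markov_general p D v0 j η hη c hc ζ hζ
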